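/- Main theorem (rank-1 multiplicative approximation): Let 0 < ε < 1 and let S be a sample of s rows of an n × d real matrix A, each chosen independently with length-squared distribution (row i chosen with probability ‖A^(i)‖^2/‖A‖_F^2). If s = Ω(1/ε^4) (e.g., s ≥ C/ε^4 for a suitable absolute constant C), then there is a random rank-1 matrix Ã whose rows lie in the span of S such that E[‖A − Ã‖_F^2] ≤ (1+ε)·‖A − π_1(A)‖_F^2. -/

import Mathlib

/-!
Let `v` be a unit vector maximizing `‖A v‖²` and `σ = ‖A v‖²`; then `AᵀA v = σ v`, and
`‖A‖_F² - σ` is the least error of a rank-one approximation. Reweighting a row `Aᵢ` sampled with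
probability `pᵢ = ‖Aᵢ‖² / ‖A‖_F²` to `zᵢ = (⟪Aᵢ, v⟫ / (σ pᵢ)) Aᵢ` gives an unbiased estimator of
`v` with second moment `‖A‖_F² / σ`, so the mean `w` of `s` samples has
`E ‖w - v‖² = (‖A‖_F² - σ) / (σ s)`. Projecting the rows of `A` onto `ℝ w` costs
`‖A‖_F² - ‖A w‖² / ‖w‖²`, which exceeds `‖A‖_F² - σ` by at most `σ ‖w - v‖²`, because
`‖A w‖² ≥ σ ⟪v, w⟫²` and `1 - ⟪v, w⟫² / ‖w‖²` is the squared distance from `v` to `ℝ w`.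
So the expected error is at most `(1 + 1/s) (‖A‖_F² - σ)`, and `s ≥ 1/ε⁴` gives `1/s ≤ ε`.
-/

open Finset Metric RealInnerProductSpace

theorem sum_mul_norm_sub_sq {α E : Type*} [Fintype α] [NormedAddCommGroup E]
    [InnerProductSpace ℝ E] {p : α → ℝ} (hp : ∑ a, p a = 1) (g : α → E) {μ : E}
    (hμ : ∑ a, p a • g a = μ) :
    ∑ a, p a * ‖g a - μ‖ ^ 2 = ∑ a, p a * ‖g a‖ ^ 2 - ‖μ‖ ^ 2 := by
  have hcross : ∑ a, p a * ⟪g a, μ⟫ = ‖μ‖ ^ 2 := by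
    rw [← real_inner_self_eq_norm_sq, ← hμ, sum_inner]
    simp only [real_inner_smul_left, hμ]
  simp only [norm_sub_sq_real, mul_add, mul_sub, sum_add_distrib, sum_sub_distrib,
    mul_left_comm _ (2 : ℝ), ← mul_sum, hcross, ← sum_mul, hp]
  ring

namespace IIDSample

variable {ι α : Type*} [Fintype ι] [DecidableEq ι] [Fintype α]

def expectation (p : α → ℝ) (F : (ι → α) → ℝ) : ℝ :=
  ∑ f, (∏ j, p (f j)) * F f

variable {p : α → ℝ}

theorem expectation_const (hp : ∑ a, p a = 1) (c : ℝ) :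
    expectation (ι := ι) p (fun _ => c) = c := by
  simp [expectation, ← sum_mul, ← Fintype.prod_sum, hp]

theorem expectation_mono (hp : ∀ a, 0 ≤ p a) {F G : (ι → α) → ℝ}
    (h : ∀ f, F f ≤ G f) : expectation p F ≤ expectation p G :=
  sum_le_sum fun f _ => mul_le_mul_of_nonneg_left (h f) (prod_nonneg fun _ _ => hp _)

theorem expectation_const_add_mul (hp : ∑ a, p a = 1) (c d : ℝ) (F : (ι → α) → ℝ) :
    expectation p (fun f => c + d * F f) = c + d * expectation p F := by
  have h1 := expectation_const (ι := ι) hp c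
  simp only [expectation] at h1 ⊢
  simp only [mul_add, sum_add_distrib, mul_left_comm _ d, ← mul_sum, h1]

theorem expectation_split (j₀ : ι) (F : (ι → α) → ℝ) :
    expectation p F = ∑ a, p a *
      expectation p (fun g : {j // j ≠ j₀} → α => F ((Equiv.funSplitAt j₀ α).symm (a, g))) := by
  rw [expectation, ← (Equiv.funSplitAt j₀ α).symm.sum_comp, Fintype.sum_prod_type]
  refine sum_congr rfl fun a _ => ?_
  rw [expectation, mul_sum]
  refine sum_congr rfl fun g _ => ?_
  have hg : ∀ j : {j // j ≠ j₀}, (Equiv.funSplitAt j₀ α).symm (a, g) j = g j := fun j => by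
    simp [Equiv.funSplitAt, Equiv.piSplitAt, j.2]
  rw [Fintype.prod_eq_mul_prod_subtype_ne _ j₀]
  simp [hg, mul_assoc]

theorem expectation_apply (hp : ∑ a, p a = 1) (j : ι) (h : α → ℝ) :
    expectation p (fun f => h (f j)) = ∑ a, p a * h a := by
  rw [expectation_split j]
  refine sum_congr rfl fun a _ => ?_
  simp [Equiv.funSplitAt, Equiv.piSplitAt, expectation_const hp]

theorem expectation_apply_apply (hp : ∑ a, p a = 1) {j k : ι} (hjk : j ≠ k)
    (h : α → α → ℝ) :
    expectation p (fun f => h (f j) (f k)) = ∑ a, ∑ b, p a * p b * h a b := by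
  rw [expectation_split j]
  refine sum_congr rfl fun a _ => ?_
  have := expectation_apply (ι := {j' // j' ≠ j}) hp ⟨k, hjk.symm⟩ (h a)
  simp [Equiv.funSplitAt, Equiv.piSplitAt, hjk.symm, this, mul_sum, mul_assoc]

theorem expectation_sum {κ : Type*} (s : Finset κ) (F : κ → (ι → α) → ℝ) :
    expectation p (fun f => ∑ k ∈ s, F k f) = ∑ k ∈ s, expectation p (F k) := by
  simp only [expectation, mul_sum]
  exact sum_comm

variable {E : Type*} [NormedAddCommGroup E] [InnerProductSpace ℝ E]

theorem expectation_norm_sum_sq (hp : ∑ a, p a = 1) (g : α → E)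
    (hg : ∑ a, p a • g a = 0) :
    expectation p (fun f : ι → α => ‖∑ j, g (f j)‖ ^ 2) =
      Fintype.card ι * ∑ a, p a * ‖g a‖ ^ 2 := by
  have hcross : ∀ j k : ι, expectation p (fun f => ⟪g (f j), g (f k)⟫) =
      if j = k then ∑ a, p a * ‖g a‖ ^ 2 else 0 := by
    intro j k
    split_ifs with hjk
    · subst hjk
      simpa [real_inner_self_eq_norm_sq] using expectation_apply hp j (fun a => ‖g a‖ ^ 2)
    · rw [expectation_apply_apply hp hjk (fun a b => ⟪g a, g b⟫)]
      have h0 : ⟪∑ a, p a • g a, ∑ b, p b • g b⟫ = 0 := by rw [hg, inner_zero_left]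
      simp only [sum_inner, inner_sum, real_inner_smul_left, real_inner_smul_right] at h0
      rw [← h0, sum_comm]
      exact sum_congr rfl fun a _ => sum_congr rfl fun b _ => by ring
  simp_rw [← real_inner_self_eq_norm_sq, sum_inner, inner_sum, expectation_sum, hcross]
  simp

theorem expectation_norm_mean_sub_sq [Nonempty ι] (hp : ∑ a, p a = 1) (g : α → E) {μ : E}
    (hμ : ∑ a, p a • g a = μ) :
    expectation p (fun f : ι → α => ‖(Fintype.card ι : ℝ)⁻¹ • ∑ j, g (f j) - μ‖ ^ 2) =
      (∑ a, p a * ‖g a‖ ^ 2 - ‖μ‖ ^ 2) / Fintype.card ι := by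
  have hs : (Fintype.card ι : ℝ) ≠ 0 := Nat.cast_ne_zero.mpr Fintype.card_ne_zero
  have hcenter : ∑ a, p a • (g a - μ) = 0 := by
    simp [smul_sub, sum_sub_distrib, ← sum_smul, hp, hμ]
  have hmean : ∀ f : ι → α, ‖(Fintype.card ι : ℝ)⁻¹ • ∑ j, g (f j) - μ‖ ^ 2 =
      0 + ((Fintype.card ι : ℝ) ^ 2)⁻¹ * ‖∑ j, (g (f j) - μ)‖ ^ 2 := fun f => by
    have h : (Fintype.card ι : ℝ)⁻¹ • ∑ j, g (f j) - μ =
        (Fintype.card ι : ℝ)⁻¹ • ∑ j, (g (f j) - μ) := by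
      rw [sum_sub_distrib, sum_const, card_univ, smul_sub, ← Nat.cast_smul_eq_nsmul ℝ,
        inv_smul_smul₀ hs]
    rw [h, norm_smul, mul_pow, Real.norm_eq_abs, sq_abs, inv_pow, zero_add]
  simp_rw [hmean]
  rw [expectation_const_add_mul hp, expectation_norm_sum_sq hp _ hcenter,
    sum_mul_norm_sub_sq hp g hμ]
  field_simp
  ring

end IIDSample

section LineProjection

variable {E : Type*} [NormedAddCommGroup E] [InnerProductSpace ℝ E]

-- Also true for `y = 0`, where `⟪x, y⟫ / ‖y‖ = 0`.
theorem norm_sub_smul_sq_eq (x y : E) (c : ℝ) :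
    ‖x - c • y‖ ^ 2 = ‖x‖ ^ 2 - ⟪x, y⟫ ^ 2 / ‖y‖ ^ 2 + (c * ‖y‖ - ⟪x, y⟫ / ‖y‖) ^ 2 := by
  rcases eq_or_ne y 0 with rfl | hy
  · simp
  have hy' : ‖y‖ ≠ 0 := norm_ne_zero_iff.mpr hy
  rw [norm_sub_sq_real, norm_smul, real_inner_smul_right, Real.norm_eq_abs, mul_pow, sq_abs]
  field_simp
  ring

theorem norm_sq_sub_inner_sq_div_le (x y : E) (c : ℝ) :
    ‖x‖ ^ 2 - ⟪x, y⟫ ^ 2 / ‖y‖ ^ 2 ≤ ‖x - c • y‖ ^ 2 := by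
  rw [norm_sub_smul_sq_eq]
  exact le_add_of_nonneg_right (sq_nonneg _)

theorem norm_sub_inner_div_smul_sq (x y : E) :
    ‖x - (⟪x, y⟫ / ‖y‖ ^ 2) • y‖ ^ 2 = ‖x‖ ^ 2 - ⟪x, y⟫ ^ 2 / ‖y‖ ^ 2 := by
  rw [norm_sub_smul_sq_eq, add_eq_left, sq_eq_zero_iff, sub_eq_zero]
  rcases eq_or_ne ‖y‖ 0 with hy | hy
  · simp [hy]
  · field_simp

end LineProjection

section TopSingularVector

variable {E m : Type*} [NormedAddCommGroup E] [InnerProductSpace ℝ E] [Fintype m]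

theorem sum_inner_sq_nonneg (a : m → E) (x : E) : 0 ≤ ∑ i, ⟪a i, x⟫ ^ 2 :=
  sum_nonneg fun _ _ => sq_nonneg _

-- The `a i` are the rows of a matrix `A`, so that `∑ i, ⟪a i, x⟫ ^ 2 = ‖A x‖ ^ 2`.
def IsTopSingularVector (a : m → E) (v : E) : Prop :=
  ‖v‖ = 1 ∧ ∀ x, ∑ i, ⟪a i, x⟫ ^ 2 ≤ (∑ i, ⟪a i, v⟫ ^ 2) * ‖x‖ ^ 2

theorem exists_isTopSingularVector [FiniteDimensional ℝ E] [Nontrivial E] (a : m → E) :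
    ∃ v, IsTopSingularVector a v := by
  obtain ⟨v, hv, hmax⟩ := (isCompact_sphere (0 : E) 1).exists_isMaxOn
    (NormedSpace.sphere_nonempty.mpr zero_le_one)
    (by fun_prop : Continuous fun x => ∑ i, ⟪a i, x⟫ ^ 2).continuousOn
  refine ⟨v, by simpa using hv, fun x => ?_⟩
  rcases eq_or_ne x 0 with rfl | hx
  · simp
  have hx' : 0 < ‖x‖ := norm_pos_iff.mpr hx
  have h := hmax (show ‖x‖⁻¹ • x ∈ sphere (0 : E) 1 by simp [norm_smul, hx'.ne'])
  simp only [Set.mem_ofPred_eq, real_inner_smul_right, mul_pow, ← mul_sum] at h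
  rwa [inv_pow, inv_mul_le_iff₀ (by positivity), mul_comm] at h

variable {a : m → E} {v : E}

namespace IsTopSingularVector

theorem sum_inner_smul [CompleteSpace E] (hv : IsTopSingularVector a v) :
    ∑ i, ⟪a i, v⟫ • a i = (∑ i, ⟪a i, v⟫ ^ 2) • v := by
  let T : E →L[ℝ] E := ∑ i, (innerSL ℝ (a i)).smulRight (a i)
  have hT : ∀ x, T x = ∑ i, ⟪a i, x⟫ • a i := fun x => by simp [T]
  have hq : ∀ x, T.reApplyInnerSelf x = ∑ i, ⟪a i, x⟫ ^ 2 := fun x => by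
    rw [ContinuousLinearMap.reApplyInnerSelf_apply, hT, RCLike.re_to_real, sum_inner]
    simp only [real_inner_smul_left, sq]
  have hsymm : IsSelfAdjoint T := by
    rw [ContinuousLinearMap.isSelfAdjoint_iff_isSymmetric]
    intro x y
    simp [hT, sum_inner, inner_sum, real_inner_smul_right, mul_comm, real_inner_comm]
  have hmax : IsMaxOn T.reApplyInnerSelf (sphere 0 ‖v‖) v := fun x hx => by
    have h := hv.2 x
    simp only [mem_sphere_zero_iff_norm, hv.1] at hx
    simpa [hq, hx] using h
  have h := hsymm.eq_smul_self_of_isLocalExtrOn_real (Or.inr hmax.localize)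
  rwa [hT, ContinuousLinearMap.rayleighQuotient, hq, hv.1, one_pow, div_one] at h

theorem sum_inner_sq_pos (hv : IsTopSingularVector a v) (ha : a ≠ 0) : 0 < ∑ i, ⟪a i, v⟫ ^ 2 := by
  refine (sum_inner_sq_nonneg a v).lt_of_ne' fun h0 => ha (funext fun k => ?_)
  have hk : ⟪a k, a k⟫ ^ 2 ≤ ∑ i, ⟪a i, a k⟫ ^ 2 :=
    single_le_sum (f := fun i => ⟪a i, a k⟫ ^ 2) (fun _ _ => sq_nonneg _) (mem_univ k)
  have := hv.2 (a k)
  rw [h0, zero_mul] at this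
  simpa using (pow_eq_zero_iff two_ne_zero).mp (le_antisymm (hk.trans this) (sq_nonneg _))

theorem mul_inner_sq_le [CompleteSpace E] (hv : IsTopSingularVector a v) (x : E) :
    (∑ i, ⟪a i, v⟫ ^ 2) * ⟪v, x⟫ ^ 2 ≤ ∑ i, ⟪a i, x⟫ ^ 2 := by
  set σ := ∑ i, ⟪a i, v⟫ ^ 2
  have hσ : 0 ≤ σ := sum_inner_sq_nonneg a v
  have hσx : σ * ⟪v, x⟫ = ∑ i, ⟪a i, v⟫ * ⟪a i, x⟫ := by
    rw [← real_inner_smul_left, ← hv.sum_inner_smul, sum_inner]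
    simp only [real_inner_smul_left]
  have hcs : (σ * ⟪v, x⟫) ^ 2 ≤ σ * ∑ i, ⟪a i, x⟫ ^ 2 := by
    rw [hσx]
    exact sum_mul_sq_le_sq_mul_sq _ _ _
  rcases hσ.eq_or_lt with h0 | hpos
  · rw [← h0, zero_mul]
    exact sum_inner_sq_nonneg a x
  · nlinarith

theorem sub_div_le_mul_norm_sub_sq [CompleteSpace E] (hv : IsTopSingularVector a v) (w : E) :
    ∑ i, ⟪a i, v⟫ ^ 2 - (∑ i, ⟪a i, w⟫ ^ 2) / ‖w‖ ^ 2 ≤ (∑ i, ⟪a i, v⟫ ^ 2) * ‖w - v‖ ^ 2 := by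
  set σ := ∑ i, ⟪a i, v⟫ ^ 2
  have hσ : 0 ≤ σ := sum_inner_sq_nonneg a v
  have hangle : 1 - ⟪v, w⟫ ^ 2 / ‖w‖ ^ 2 ≤ ‖w - v‖ ^ 2 := by
    simpa [hv.1, norm_sub_rev] using norm_sq_sub_inner_sq_div_le v w 1
  have hq : σ * (⟪v, w⟫ ^ 2 / ‖w‖ ^ 2) ≤ (∑ i, ⟪a i, w⟫ ^ 2) / ‖w‖ ^ 2 := by
    rw [← mul_div_assoc]
    exact div_le_div_of_nonneg_right (hv.mul_inner_sq_le w) (sq_nonneg _)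
  nlinarith

theorem sub_le_sum_norm_sub_smul_sq (hv : IsTopSingularVector a v) (x : m → ℝ) (y : E) :
    ∑ i, ‖a i‖ ^ 2 - ∑ i, ⟪a i, v⟫ ^ 2 ≤ ∑ i, ‖a i - x i • y‖ ^ 2 := by
  have hq : (∑ i, ⟪a i, y⟫ ^ 2) / ‖y‖ ^ 2 ≤ ∑ i, ⟪a i, v⟫ ^ 2 :=
    div_le_of_le_mul₀ (sq_nonneg _) (sum_inner_sq_nonneg a v) (hv.2 y)
  calc ∑ i, ‖a i‖ ^ 2 - ∑ i, ⟪a i, v⟫ ^ 2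
      ≤ ∑ i, (‖a i‖ ^ 2 - ⟪a i, y⟫ ^ 2 / ‖y‖ ^ 2) := by
        rw [sum_sub_distrib, ← sum_div]
        linarith
    _ ≤ ∑ i, ‖a i - x i • y‖ ^ 2 :=
        sum_le_sum fun i _ => norm_sq_sub_inner_sq_div_le (a i) y (x i)

end IsTopSingularVector

end TopSingularVector

noncomputable section LengthSquaredSampling

variable {E m : Type*} [NormedAddCommGroup E] [Fintype m]

def lengthSqProb (a : m → E) (i : m) : ℝ := ‖a i‖ ^ 2 / ∑ k, ‖a k‖ ^ 2

variable {a : m → E}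

theorem sum_norm_sq_pos (ha : a ≠ 0) : 0 < ∑ k, ‖a k‖ ^ 2 := by
  obtain ⟨k, hk⟩ := Function.ne_iff.mp ha
  exact sum_pos' (fun _ _ => sq_nonneg _) ⟨k, mem_univ k, pow_pos (norm_pos_iff.mpr hk) 2⟩

theorem lengthSqProb_nonneg (a : m → E) (i : m) : 0 ≤ lengthSqProb a i :=
  div_nonneg (sq_nonneg _) (sum_nonneg fun _ _ => sq_nonneg _)

theorem sum_lengthSqProb (ha : a ≠ 0) : ∑ i, lengthSqProb a i = 1 := by
  simp only [lengthSqProb]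
  rw [← sum_div, div_self (sum_norm_sq_pos ha).ne']

theorem lengthSqProb_ne_zero (ha : a ≠ 0) {i : m} (hi : a i ≠ 0) : lengthSqProb a i ≠ 0 :=
  div_ne_zero (by simpa using hi) (sum_norm_sq_pos ha).ne'

variable [InnerProductSpace ℝ E] {v : E}

def topVectorEstimate (a : m → E) (v : E) (i : m) : E :=
  (⟪a i, v⟫ / ((∑ k, ⟪a k, v⟫ ^ 2) * lengthSqProb a i)) • a i

def sampleTopVectorEstimate {ι : Type*} [Fintype ι] (a : m → E) (v : E) (f : ι → m) : E :=
  (Fintype.card ι : ℝ)⁻¹ • ∑ j, topVectorEstimate a v (f j)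

theorem sampleTopVectorEstimate_mem_span {ι : Type*} [Fintype ι] (a : m → E) (v : E)
    (f : ι → m) :
    sampleTopVectorEstimate a v f ∈ Submodule.span ℝ (Set.range fun j => a (f j)) :=
  Submodule.smul_mem _ _ <| Submodule.sum_mem _ fun j _ =>
    Submodule.smul_mem _ _ (Submodule.subset_span ⟨j, rfl⟩)

theorem sum_lengthSqProb_smul_topVectorEstimate [CompleteSpace E] (ha : a ≠ 0)
    (hv : IsTopSingularVector a v) :
    ∑ i, lengthSqProb a i • topVectorEstimate a v i = v := by
  have hσ := (hv.sum_inner_sq_pos ha).ne'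
  have hterm : ∀ i, lengthSqProb a i • topVectorEstimate a v i =
      (∑ k, ⟪a k, v⟫ ^ 2)⁻¹ • ⟪a i, v⟫ • a i := fun i => by
    rcases eq_or_ne (a i) 0 with hi | hi
    · simp [topVectorEstimate, hi]
    · have hp := lengthSqProb_ne_zero ha hi
      rw [topVectorEstimate, smul_smul, smul_smul]
      congr 1
      field_simp
  simp_rw [hterm, ← smul_sum, hv.sum_inner_smul, inv_smul_smul₀ hσ]

theorem sum_lengthSqProb_mul_norm_sq_topVectorEstimate (ha : a ≠ 0)
    (hv : IsTopSingularVector a v) :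
    ∑ i, lengthSqProb a i * ‖topVectorEstimate a v i‖ ^ 2 =
      (∑ k, ‖a k‖ ^ 2) / ∑ k, ⟪a k, v⟫ ^ 2 := by
  have hσ := (hv.sum_inner_sq_pos ha).ne'
  have hF := (sum_norm_sq_pos ha).ne'
  have hterm : ∀ i, lengthSqProb a i * ‖topVectorEstimate a v i‖ ^ 2 =
      (∑ k, ‖a k‖ ^ 2) / (∑ k, ⟪a k, v⟫ ^ 2) ^ 2 * ⟪a i, v⟫ ^ 2 := fun i => by
    rcases eq_or_ne (a i) 0 with hi | hi
    · simp [topVectorEstimate, hi]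
    · have hai : ‖a i‖ ≠ 0 := norm_ne_zero_iff.mpr hi
      rw [topVectorEstimate, norm_smul, Real.norm_eq_abs, mul_pow, sq_abs, lengthSqProb]
      field_simp
  rw [Finset.sum_congr rfl fun i _ => hterm i, ← mul_sum]
  field_simp

variable {ι : Type*} [Fintype ι] [DecidableEq ι] [Nonempty ι] [CompleteSpace E]

theorem expectation_norm_sampleTopVectorEstimate_sub_sq (ha : a ≠ 0)
    (hv : IsTopSingularVector a v) :
    IIDSample.expectation (lengthSqProb a)
        (fun f : ι → m => ‖sampleTopVectorEstimate a v f - v‖ ^ 2) =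
      (∑ k, ‖a k‖ ^ 2 - ∑ k, ⟪a k, v⟫ ^ 2) / ((∑ k, ⟪a k, v⟫ ^ 2) * Fintype.card ι) := by
  have hσ := (hv.sum_inner_sq_pos ha).ne'
  simp only [sampleTopVectorEstimate]
  rw [IIDSample.expectation_norm_mean_sub_sq (sum_lengthSqProb ha) _
      (sum_lengthSqProb_smul_topVectorEstimate ha hv),
    sum_lengthSqProb_mul_norm_sq_topVectorEstimate ha hv, hv.1]
  field_simp

theorem expectation_sum_norm_sub_proj_le (ha : a ≠ 0) (hv : IsTopSingularVector a v) :
    IIDSample.expectation (lengthSqProb a) (fun f : ι → m =>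
        let w := sampleTopVectorEstimate a v f
        ∑ i, ‖a i - (⟪a i, w⟫ / ‖w‖ ^ 2) • w‖ ^ 2) ≤
      (1 + 1 / Fintype.card ι) * (∑ k, ‖a k‖ ^ 2 - ∑ k, ⟪a k, v⟫ ^ 2) := by
  have hσ := (hv.sum_inner_sq_pos ha).ne'
  have hs : (Fintype.card ι : ℝ) ≠ 0 := Nat.cast_ne_zero.mpr Fintype.card_ne_zero
  have hloss : ∀ w : E, ∑ i, ‖a i - (⟪a i, w⟫ / ‖w‖ ^ 2) • w‖ ^ 2 ≤
      (∑ k, ‖a k‖ ^ 2 - ∑ k, ⟪a k, v⟫ ^ 2) + (∑ k, ⟪a k, v⟫ ^ 2) * ‖w - v‖ ^ 2 := fun w => by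
    simp only [norm_sub_inner_div_smul_sq, sum_sub_distrib, ← sum_div]
    linarith [hv.sub_div_le_mul_norm_sub_sq w]
  refine (IIDSample.expectation_mono (lengthSqProb_nonneg a)
    fun f => hloss (sampleTopVectorEstimate a v f)).trans_eq ?_
  rw [IIDSample.expectation_const_add_mul (sum_lengthSqProb ha),
    expectation_norm_sampleTopVectorEstimate_sub_sq ha hv]
  field_simp

end LengthSquaredSampling

theorem Matrix.exists_eq_vecMulVec_of_rank_le_one {K m n : Type*} [Field K] [Fintype m]
    [Fintype n] {B : Matrix m n K} (hB : B.rank ≤ 1) :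
    ∃ (x : m → K) (y : n → K), B = Matrix.vecMulVec x y := by
  classical
  obtain ⟨z, hz⟩ := ((Submodule.finrank_le_one_iff_isPrincipal _).mp hB).principal
  have hcol : ∀ t, ∃ c : K, c • z = B.col t := fun t => by
    have hmem : B.mulVec (Pi.single t 1) ∈ LinearMap.range B.mulVecLin := ⟨_, rfl⟩
    rwa [hz, Submodule.mem_span_singleton, Matrix.mulVec_single_one] at hmem
  choose y hy using hcol
  exact ⟨z, y, Matrix.ext fun i t => by
    simpa [Matrix.vecMulVec_apply, mul_comm] using (congrFun (hy t) i).symm⟩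

theorem exists_sampled_rank_le_one_approx {n d : ℕ} {A : Matrix (Fin n) (Fin d) ℝ} (hA : A ≠ 0)
    {s : ℕ} (hs : 0 < s) :
    ∃ Atil : (Fin s → Fin n) → Matrix (Fin n) (Fin d) ℝ,
      (∀ f, (Atil f).rank ≤ 1) ∧
      (∀ f i, (Atil f) i ∈ Submodule.span ℝ (Set.range fun j => A (f j))) ∧
      (∀ B : Matrix (Fin n) (Fin d) ℝ, B.rank ≤ 1 →
        ∑ f : Fin s → Fin n,
            (∏ j, (∑ t, A (f j) t ^ 2) / (∑ i, ∑ t, A i t ^ 2)) *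
              (∑ i, ∑ t, (A i t - Atil f i t) ^ 2)
          ≤ (1 + 1 / s) * ∑ i, ∑ t, (A i t - B i t) ^ 2) := by
  let a : Fin n → EuclideanSpace ℝ (Fin d) := fun i => WithLp.toLp 2 (A i)
  have ha : a ≠ 0 := fun h => hA (funext fun i => congrArg WithLp.ofLp (congrFun h i))
  obtain ⟨i₀, hi₀⟩ := Function.ne_iff.mp ha
  have : Nontrivial (EuclideanSpace ℝ (Fin d)) := nontrivial_of_ne _ _ hi₀
  obtain ⟨v, hv⟩ := exists_isTopSingularVector a
  have : Nonempty (Fin s) := Fin.pos_iff_nonempty.mp hs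
  let w := sampleTopVectorEstimate (ι := Fin s) a v
  refine ⟨fun f => Matrix.vecMulVec (fun i => ⟪a i, w f⟫ / ‖w f‖ ^ 2) (w f).ofLp,
    fun f => Matrix.rank_vecMulVec_le _ _, fun f i => ?_, fun B hB => ?_⟩
  · have h := Submodule.mem_map_of_mem (f := (WithLp.linearEquiv 2 ℝ (Fin d → ℝ)).toLinearMap)
      (sampleTopVectorEstimate_mem_span a v f)
    rw [Submodule.map_span, ← Set.range_comp] at h
    exact Submodule.smul_mem _ _ h
  · obtain ⟨x, y, rfl⟩ := Matrix.exists_eq_vecMulVec_of_rank_le_one hB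
    have h := (expectation_sum_norm_sub_proj_le (ι := Fin s) ha hv).trans <|
      mul_le_mul_of_nonneg_left (hv.sub_le_sum_norm_sub_smul_sq x (WithLp.toLp 2 y))
        (by positivity)
    simpa [IIDSample.expectation, lengthSqProb, EuclideanSpace.real_norm_sq_eq, a, w,
      Matrix.vecMulVec_apply] using h

/-- Main theorem: there is an absolute constant `C` such that for any nonzero matrix
`A` and `0 < ε < 1`, if `s ≥ C/ε^4` rows are sampled i.i.d. with length-squared
probabilities, then there is a rank-1 matrix `Ã` (a function of the sample) whose
rows lie in the span of the sampled rows, with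
`E[‖A − Ã‖_F^2] ≤ (1+ε)·‖A − π_1(A)‖_F^2`. -/
theorem stmt17 :
    ∃ C : ℝ, 0 < C ∧
      ∀ (n d : ℕ) (A : Matrix (Fin n) (Fin d) ℝ), A ≠ 0 →
        ∀ ε : ℝ, 0 < ε → ε < 1 →
          ∀ s : ℕ, C / ε ^ 4 ≤ (s : ℝ) →
            ∃ Atil : (Fin s → Fin n) → Matrix (Fin n) (Fin d) ℝ,
              (∀ f, (Atil f).rank ≤ 1) ∧
              (∀ f i, (Atil f) i ∈ Submodule.span ℝ (Set.range fun j => A (f j))) ∧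
              (∀ B : Matrix (Fin n) (Fin d) ℝ, B.rank ≤ 1 →
                ∑ f : Fin s → Fin n,
                    (∏ j, (∑ t, A (f j) t ^ 2) / (∑ i, ∑ t, A i t ^ 2)) *
                      (∑ i, ∑ t, (A i t - Atil f i t) ^ 2)
                  ≤ (1 + ε) * ∑ i, ∑ t, (A i t - B i t) ^ 2) := by
  refine ⟨1, one_pos, fun n d A hA ε hε hε1 s hs => ?_⟩
  have hs' : 1 / ε ≤ s := (one_div_le_one_div_of_le (by positivity)
    (pow_le_of_le_one hε.le hε1.le (by norm_num))).trans hs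
  have hspos : (0 : ℝ) < s := (one_div_pos.mpr hε).trans_le hs'
  obtain ⟨Atil, hrank, hspan, hbound⟩ := exists_sampled_rank_le_one_approx hA (s := s)
    (by exact_mod_cast hspos)
  refine ⟨Atil, hrank, hspan, fun B hB => (hbound B hB).trans ?_⟩
  gcongr
  rwa [one_div_le hspos hε]
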